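/- arXiv:1809.05446 — 2 statements merged into one kernel-verified Lean document; each statement's English description precedes it below -/
import Mathlib

section
/- For every k = 1,…,n such that s_{n−k} > 0, one has b_k = s_{n−k+1}/s_{n−k}, and for every k = 1,…,n−1 such that s_{n−k} > 0, one has g_k = s_{n−k−1}/s_{n−k}; that is, the suprema defining b_k and g_k are attained at i = k−1 and i = k+1 respectively. -/
/-!
Extending `e_k` by `0` to negative indices, `e_k(x ::ₘ s) = e_k(s) + x e_{k-1}(s)` holds for every
integer `k`. Expanding `e_a e_b` for `x ::ₘ s` along this recursion, each of the three resulting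
terms is dominated by the matching term of `e_c e_d` by induction, so for nonnegative entries
`e_a e_b ≤ e_c e_d` whenever `a + b = c + d` and `a ≤ c ≤ b`. Telescoping this gives
`e_{j+m+1} e_j^m ≤ e_{j+1}^{m+1}` and `e_j e_{j+m+1}^m ≤ e_{j+m}^{m+1}`, which after taking
`(m+1)`-th roots say that every term of the suprema `b_k` and `g_k` is at most the term at
`i = k - 1`, respectively `i = k + 1`.
-/

noncomputable section

/-- The `k`-th elementary symmetric function of `σ₁, …, σ_n` (with value `1` for `k = 0`). -/
def esym (n : ℕ) (σ : Fin n → ℝ) (k : ℕ) : ℝ :=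
  ∑ t ∈ Finset.univ.powersetCard k, ∏ i ∈ t, σ i

/-- `b_k = sup_{0 ≤ i ≤ k−1} (s_{n−i}/s_{n−k})^{1/(k−i)}`. -/
def bq (n : ℕ) (σ : Fin n → ℝ) (k : ℕ) : ℝ :=
  ⨆ i : Fin k, (esym n σ (n - (i : ℕ)) / esym n σ (n - k)) ^ ((1 : ℝ) / ((k : ℝ) - (i : ℕ)))

/-- `g_k = sup_{k+1 ≤ i ≤ n} (s_{n−i}/s_{n−k})^{1/(i−k)}` for `k < n`, and `g_n = 1`. -/
def gq (n : ℕ) (σ : Fin n → ℝ) (k : ℕ) : ℝ :=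
  if k = n then 1
  else ⨆ j : Fin (n - k),
    (esym n σ (n - (k + 1 + (j : ℕ))) / esym n σ (n - k)) ^ ((1 : ℝ) / ((j : ℕ) + 1))

/-- `a_k = b_k · g_k`. -/
def aq (n : ℕ) (σ : Fin n → ℝ) (k : ℕ) : ℝ := bq n σ k * gq n σ k

namespace Multiset

section esymm

variable {R : Type*} [CommSemiring R]

theorem esymm_zero_left (k : ℕ) : (0 : Multiset R).esymm k = if k = 0 then 1 else 0 := by
  cases k <;> simp [esymm, powersetCard_zero_left, powersetCard_zero_right]

theorem esymm_cons_succ (x : R) (s : Multiset R) (k : ℕ) :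
    (x ::ₘ s).esymm (k + 1) = s.esymm (k + 1) + x * s.esymm k := by
  simp [esymm, powersetCard_cons, map_map, sum_map_mul_left]

def esymmInt (s : Multiset R) (k : ℤ) : R := if k < 0 then 0 else s.esymm k.toNat

@[simp]
theorem esymmInt_natCast (s : Multiset R) (k : ℕ) : s.esymmInt k = s.esymm k := by
  simp [esymmInt]

theorem esymmInt_zero_left (k : ℤ) : (0 : Multiset R).esymmInt k = if k = 0 then 1 else 0 := by
  unfold esymmInt
  split_ifs <;> simp_all [esymm_zero_left]
  omega

theorem esymmInt_cons (x : R) (s : Multiset R) (k : ℤ) :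
    (x ::ₘ s).esymmInt k = s.esymmInt k + x * s.esymmInt (k - 1) := by
  rcases lt_or_ge k 0 with hk | hk
  · simp [esymmInt, hk, show k - 1 < 0 by omega]
  obtain ⟨k, rfl⟩ := Int.eq_ofNat_of_zero_le hk
  cases k with
  | zero => simp [esymmInt, esymm, powersetCard_zero_left]
  | succ k =>
    rw [show ((k + 1 : ℕ) : ℤ) - 1 = k by omega, esymmInt_natCast, esymmInt_natCast,
      esymmInt_natCast, esymm_cons_succ]

end esymm

section OrderedSemiring

variable {R : Type*} [CommSemiring R] [PartialOrder R] [IsOrderedRing R] {s : Multiset R}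

theorem esymm_nonneg (hs : ∀ x ∈ s, 0 ≤ x) (k : ℕ) : 0 ≤ s.esymm k :=
  sum_nonneg fun _ hy ↦ by
    obtain ⟨t, ht, rfl⟩ := mem_map.1 hy
    exact prod_nonneg fun x hx ↦ hs x (mem_of_le (mem_powersetCard.1 ht).1 hx)

theorem esymmInt_nonneg (hs : ∀ x ∈ s, 0 ≤ x) (k : ℤ) : 0 ≤ s.esymmInt k := by
  unfold esymmInt
  split_ifs
  exacts [le_rfl, esymm_nonneg hs _]

theorem esymmInt_mul_esymmInt_le (hs : ∀ x ∈ s, 0 ≤ x) {a b c d : ℤ} (hsum : a + b = c + d)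
    (hac : a ≤ c) (hcb : c ≤ b) :
    s.esymmInt a * s.esymmInt b ≤ s.esymmInt c * s.esymmInt d := by
  induction s using Multiset.induction_on generalizing a b c d with
  | empty =>
    simp only [esymmInt_zero_left]
    split_ifs <;> first | omega | simp
  | cons x s ih =>
    have hx : 0 ≤ x := hs x (mem_cons_self x s)
    replace ih := @ih fun y hy ↦ hs y (mem_cons_of_mem hy)
    rcases hac.eq_or_lt with rfl | hac
    · rw [show b = d by omega]
    set e := s.esymmInt
    have h₀ : e a * e b ≤ e c * e d := ih hsum hac.le hcb
    have h₁ : e a * e (b - 1) ≤ e (c - 1) * e d := ih (by omega) (by omega) (by omega)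
    have h₂ : e (a - 1) * e b ≤ e c * e (d - 1) := ih (by omega) (by omega) (by omega)
    have h₃ : e (a - 1) * e (b - 1) ≤ e (c - 1) * e (d - 1) :=
      ih (by omega) (by omega) (by omega)
    simp only [esymmInt_cons]
    calc (e a + x * e (a - 1)) * (e b + x * e (b - 1))
        = e a * e b + x * (e a * e (b - 1) + e (a - 1) * e b)
          + x ^ 2 * (e (a - 1) * e (b - 1)) := by ring
      _ ≤ e c * e d + x * (e (c - 1) * e d + e c * e (d - 1))
          + x ^ 2 * (e (c - 1) * e (d - 1)) := by gcongr
      _ = (e c + x * e (c - 1)) * (e d + x * e (d - 1)) := by ring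

theorem esymm_mul_esymm_le (hs : ∀ x ∈ s, 0 ≤ x) {a b c d : ℕ} (hsum : a + b = c + d)
    (hac : a ≤ c) (hcb : c ≤ b) : s.esymm a * s.esymm b ≤ s.esymm c * s.esymm d := by
  simpa using esymmInt_mul_esymmInt_le hs (a := a) (b := b) (c := c) (d := d)
    (by omega) (by omega) (by omega)

theorem esymm_add_succ_mul_pow_le (hs : ∀ x ∈ s, 0 ≤ x) (j m : ℕ) :
    s.esymm (j + m + 1) * s.esymm j ^ m ≤ s.esymm (j + 1) ^ (m + 1) := by
  induction m with
  | zero => simp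
  | succ m ih =>
    have key : s.esymm j * s.esymm (j + m + 2) ≤ s.esymm (j + 1) * s.esymm (j + m + 1) :=
      esymm_mul_esymm_le hs (by omega) (by omega) (by omega)
    have hj := esymm_nonneg hs j
    calc s.esymm (j + (m + 1) + 1) * s.esymm j ^ (m + 1)
        = s.esymm j * s.esymm (j + m + 2) * s.esymm j ^ m := by ring_nf
      _ ≤ s.esymm (j + 1) * s.esymm (j + m + 1) * s.esymm j ^ m := by gcongr
      _ = s.esymm (j + 1) * (s.esymm (j + m + 1) * s.esymm j ^ m) := by ring
      _ ≤ s.esymm (j + 1) * s.esymm (j + 1) ^ (m + 1) := by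
        gcongr
        exact esymm_nonneg hs _
      _ = s.esymm (j + 1) ^ (m + 1 + 1) := by ring

theorem esymm_mul_esymm_add_succ_pow_le (hs : ∀ x ∈ s, 0 ≤ x) (j m : ℕ) :
    s.esymm j * s.esymm (j + m + 1) ^ m ≤ s.esymm (j + m) ^ (m + 1) := by
  induction m generalizing j with
  | zero => simp
  | succ m ih =>
    have key : s.esymm j * s.esymm (j + m + 2) ≤ s.esymm (j + 1) * s.esymm (j + m + 1) :=
      esymm_mul_esymm_le hs (by omega) (by omega) (by omega)
    have hj := esymm_nonneg hs (j + m + 2)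
    calc s.esymm j * s.esymm (j + (m + 1) + 1) ^ (m + 1)
        = s.esymm j * s.esymm (j + m + 2) * s.esymm (j + m + 2) ^ m := by ring_nf
      _ ≤ s.esymm (j + 1) * s.esymm (j + m + 1) * s.esymm (j + m + 2) ^ m := by gcongr
      _ = s.esymm (j + m + 1) * (s.esymm (j + 1) * s.esymm (j + 1 + m + 1) ^ m) := by ring_nf
      _ ≤ s.esymm (j + m + 1) * s.esymm (j + m + 1) ^ (m + 1) := by
        gcongr
        · exact esymm_nonneg hs _
        · simpa [add_right_comm] using ih (j + 1)
      _ = s.esymm (j + (m + 1)) ^ (m + 1 + 1) := by ring_nf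

end OrderedSemiring

end Multiset

theorem div_rpow_one_div_succ_le_div {p q r : ℝ} (m : ℕ) (hp : 0 < p) (hq : 0 ≤ q)
    (hr : 0 ≤ r) (h : q * p ^ m ≤ r ^ (m + 1)) : (q / p) ^ ((1 : ℝ) / (m + 1)) ≤ r / p := by
  rw [one_div, Real.rpow_inv_le_iff_of_pos (by positivity) (by positivity) (by positivity)]
  have hpow : (r / p) ^ ((m : ℝ) + 1) = r ^ (m + 1) / p ^ (m + 1) := by
    rw [← div_pow]
    exact_mod_cast Real.rpow_natCast (r / p) (m + 1)
  rw [hpow, div_le_div_iff₀ hp (by positivity)]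
  calc q * p ^ (m + 1) = q * p ^ m * p := by ring
    _ ≤ r ^ (m + 1) * p := by gcongr

theorem ciSup_eq_of_forall_le_of_eq {α ι : Type*} [ConditionallyCompleteLattice α]
    {f : ι → α} {v : α} (i₀ : ι) (h : ∀ i, f i ≤ v) (h₀ : f i₀ = v) : ⨆ i, f i = v :=
  have : Nonempty ι := ⟨i₀⟩
  have hv : IsGreatest (Set.range f) v := ⟨⟨i₀, h₀⟩, by rintro _ ⟨i, rfl⟩; exact h i⟩
  hv.isLUB.ciSup_eq

section esym

variable {n : ℕ} {σ : Fin n → ℝ}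

theorem esym_eq_esymm (k : ℕ) : esym n σ k = (Finset.univ.val.map σ).esymm k :=
  (Finset.esymm_map_val σ _ k).symm

variable (hσ : ∀ i, 0 ≤ σ i)
include hσ

theorem forall_mem_map_univ_nonneg : ∀ x ∈ Finset.univ.val.map σ, 0 ≤ x := by
  simpa using hσ

theorem esym_nonneg (k : ℕ) : 0 ≤ esym n σ k := by
  rw [esym_eq_esymm]
  exact Multiset.esymm_nonneg (forall_mem_map_univ_nonneg hσ) k

theorem bq_eq {k : ℕ} (hk : 1 ≤ k) (hkn : k ≤ n) (hpos : 0 < esym n σ (n - k)) :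
    bq n σ k = esym n σ (n - k + 1) / esym n σ (n - k) := by
  refine ciSup_eq_of_forall_le_of_eq ⟨k - 1, by omega⟩ (fun i ↦ ?_) ?_
  · set m := k - 1 - i
    have hexp : (k : ℝ) - (i : ℕ) = m + 1 := by
      have : (k : ℝ) = i + m + 1 := by exact_mod_cast (show k = i + m + 1 by omega)
      linarith
    have chain : esym n σ (n - i) * esym n σ (n - k) ^ m ≤ esym n σ (n - k + 1) ^ (m + 1) := by
      have h := Multiset.esymm_add_succ_mul_pow_le (forall_mem_map_univ_nonneg hσ) (n - k) m
      rwa [show n - k + m + 1 = n - i by omega, ← esym_eq_esymm, ← esym_eq_esymm,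
        ← esym_eq_esymm] at h
    rw [hexp]
    exact div_rpow_one_div_succ_le_div m hpos (esym_nonneg hσ _) (esym_nonneg hσ _) chain
  · have hexp : (k : ℝ) - ((k - 1 : ℕ) : ℝ) = 1 := by
      rw [Nat.cast_sub hk]
      ring
    simp [hexp, show n - (k - 1) = n - k + 1 by omega]

theorem gq_eq {k : ℕ} (hkn : k < n) (hpos : 0 < esym n σ (n - k)) :
    gq n σ k = esym n σ (n - k - 1) / esym n σ (n - k) := by
  rw [gq, if_neg hkn.ne]
  refine ciSup_eq_of_forall_le_of_eq ⟨0, by omega⟩ (fun j ↦ ?_) ?_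
  · have chain : esym n σ (n - (k + 1 + j)) * esym n σ (n - k) ^ (j : ℕ)
        ≤ esym n σ (n - k - 1) ^ ((j : ℕ) + 1) := by
      have h := Multiset.esymm_mul_esymm_add_succ_pow_le (forall_mem_map_univ_nonneg hσ)
        (n - (k + 1 + j)) j
      rwa [show n - (k + 1 + j) + j + 1 = n - k by omega,
        show n - (k + 1 + j) + j = n - k - 1 by omega, ← esym_eq_esymm, ← esym_eq_esymm,
        ← esym_eq_esymm] at h
    exact div_rpow_one_div_succ_le_div j hpos (esym_nonneg hσ _) (esym_nonneg hσ _) chain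
  · simp [show n - (k + 1) = n - k - 1 by omega]

end esym

theorem stmt0_general (n : ℕ) (σ : Fin n → ℝ)
    (hnonneg : ∀ i, 0 ≤ σ i) :
    (∀ k, 1 ≤ k → k ≤ n → 0 < esym n σ (n - k) →
      bq n σ k = esym n σ (n - k + 1) / esym n σ (n - k)) ∧
    (∀ k, 1 ≤ k → k ≤ n - 1 → 0 < esym n σ (n - k) →
      gq n σ k = esym n σ (n - k - 1) / esym n σ (n - k)) :=
  ⟨fun _ hk hkn hpos ↦ bq_eq hnonneg hk hkn hpos,
    fun _ hk hkn hpos ↦ gq_eq hnonneg (by omega) hpos⟩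

/-- For every `k = 1,…,n` with `s_{n−k} > 0` one has `b_k = s_{n−k+1}/s_{n−k}`, and for every
`k = 1,…,n−1` with `s_{n−k} > 0` one has `g_k = s_{n−k−1}/s_{n−k}`: the suprema defining `b_k`
and `g_k` are attained at `i = k−1` and `i = k+1` respectively. -/
theorem stmt0 (n : ℕ) (hn : 1 ≤ n) (σ : Fin n → ℝ)
    (hdec : Antitone σ) (hnonneg : ∀ i, 0 ≤ σ i) :
    (∀ k, 1 ≤ k → k ≤ n → 0 < esym n σ (n - k) →
      bq n σ k = esym n σ (n - k + 1) / esym n σ (n - k)) ∧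
    (∀ k, 1 ≤ k → k ≤ n - 1 → 0 < esym n σ (n - k) →
      gq n σ k = esym n σ (n - k - 1) / esym n σ (n - k)) :=
  stmt0_general n σ hnonneg
end
end

section
/- For every integer p ≥ 1 and every real u with 0 ≤ u < 2/(p + 1), one has 1/(1 − u)^p − 1 ≤ p·u / (1 − ((p + 1)/2)·u). -/
/-! Clearing the positive denominators turns the inequality into the lower bound
`2 - (p+1)u ≤ (1-u)^p (2 + (p-1)u)` for `0 ≤ u ≤ 1`, which follows by induction on `p`: the
inductive step multiplies by `(1-u)(2+pu)` and uses
`(1-u)(2+pu)(2-(p+1)u) = (2-(p+2)u)(2+(p-1)u) + p(p+1)u³`. -/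

theorem two_sub_mul_le_one_sub_pow_mul (n : ℕ) {u : ℝ} (hu0 : 0 ≤ u) (hu1 : u ≤ 1) :
    2 - ((n : ℝ) + 1) * u ≤ (1 - u) ^ n * (2 + ((n : ℝ) - 1) * u) := by
  induction n with
  | zero => simp
  | succ n ih =>
    have hn : (0 : ℝ) ≤ n := n.cast_nonneg
    have hpos : 0 < 2 + ((n : ℝ) - 1) * u := by nlinarith
    have hfac : 0 ≤ (1 - u) * (2 + n * u) := mul_nonneg (by linarith) (by positivity)
    push_cast
    refine le_of_mul_le_mul_right ?_ hpos
    calc (2 - ((n : ℝ) + 1 + 1) * u) * (2 + ((n : ℝ) - 1) * u)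
        ≤ (2 - ((n : ℝ) + 1 + 1) * u) * (2 + ((n : ℝ) - 1) * u) + n * (n + 1) * u ^ 3 :=
          le_add_of_nonneg_right (by positivity)
      _ = (1 - u) * (2 + n * u) * (2 - ((n : ℝ) + 1) * u) := by ring
      _ ≤ (1 - u) * (2 + n * u) * ((1 - u) ^ n * (2 + ((n : ℝ) - 1) * u)) :=
          mul_le_mul_of_nonneg_left ih hfac
      _ = (1 - u) ^ (n + 1) * (2 + ((n : ℝ) + 1 - 1) * u) * (2 + ((n : ℝ) - 1) * u) := by ring

/-- For every integer `p ≥ 1` and every real `u` with `0 ≤ u < 2/(p+1)`, one has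
`1/(1−u)^p − 1 ≤ p·u/(1 − ((p+1)/2)·u)`. -/
theorem stmt17 (p : ℕ) (hp : 1 ≤ p) (u : ℝ) (hu0 : 0 ≤ u) (hu : u < 2 / ((p : ℝ) + 1)) :
    1 / (1 - u) ^ p - 1 ≤ (p : ℝ) * u / (1 - (((p : ℝ) + 1) / 2) * u) := by
  have hpu : u * ((p : ℝ) + 1) < 2 := (lt_div_iff₀ (by positivity)).mp hu
  have hp1 : (1 : ℝ) ≤ p := by exact_mod_cast hp
  have hu1 : u < 1 := by nlinarith
  have hD : 0 < 1 - (((p : ℝ) + 1) / 2) * u := by linarith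
  have hP : 0 < (1 - u) ^ p := pow_pos (by linarith) p
  have key := two_sub_mul_le_one_sub_pow_mul p hu0 hu1.le
  rw [sub_le_iff_le_add, div_add_one hD.ne', div_le_div_iff₀ hP hD]
  linarith
end
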